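/- arXiv:0911.2814 — 3 statements merged into one kernel-verified Lean document; each statement's English description precedes it below -/
import Mathlib

section
/- With notation as follows: θ(z,τ) = ∑_{n∈ℤ} exp(πiτn²+2πinz), a = Im(τ) > 0, z = u+vτ (u,v real), D = −(a/π)∂/∂z − 2iav. Then ∂/∂z̄ (D^k θ) = k · D^{k−1} θ for all k ≥ 1, where ∂/∂z̄ is the antiholomorphic Wirtinger derivative. -/
open Complex

/-- The Jacobi theta function `θ(z,τ) = ∑_{n ∈ ℤ} exp(πiτn² + 2πinz)`. -/
noncomputable def thetaFn (τ z : ℂ) : ℂ :=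
  ∑' n : ℤ, Complex.exp (Real.pi * Complex.I * τ * (n : ℂ) ^ 2 +
    2 * Real.pi * Complex.I * (n : ℂ) * z)

/-- The holomorphic Wirtinger derivative `∂f/∂z = (∂f/∂x - i ∂f/∂y)/2`. -/
noncomputable def wirtingerDz (f : ℂ → ℂ) (z : ℂ) : ℂ :=
  (fderiv ℝ f z 1 - Complex.I * fderiv ℝ f z Complex.I) / 2

/-- The antiholomorphic Wirtinger derivative `∂f/∂z̄ = (∂f/∂x + i ∂f/∂y)/2`. -/
noncomputable def wirtingerDzbar (f : ℂ → ℂ) (z : ℂ) : ℂ :=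
  (fderiv ℝ f z 1 + Complex.I * fderiv ℝ f z Complex.I) / 2

/-- The operator `D = -(a/π)·∂/∂z - 2iav`, where `a = Im τ` and `v = Im z / Im τ`. -/
noncomputable def Dop (τ : ℂ) (f : ℂ → ℂ) : ℂ → ℂ := fun z =>
  -((τ.im / Real.pi : ℝ) : ℂ) * wirtingerDz f z -
    2 * Complex.I * (τ.im : ℂ) * ((z.im / τ.im : ℝ) : ℂ) * f z

/-! On `C²` functions `∂/∂z̄` commutes with `∂/∂z` (symmetry of the second real derivative), and
`∂/∂z̄ (-2iav) = -2ia · i/(2a) = 1`, so `∂/∂z̄ ∘ D = D ∘ ∂/∂z̄ + id`. Applying this to the smooth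
functions `D^k θ` and using `∂θ/∂z̄ = 0` gives `∂/∂z̄ (D^k θ) = k D^{k-1} θ` by induction on `k`. -/

open ContinuousLinearMap
open scoped ContDiff

/- `∂` and `∂̄` as continuous linear functionals of the real derivative, so that the chain rule
differentiates them. -/
noncomputable def dzFunctional : (ℂ →L[ℝ] ℂ) →L[ℝ] ℂ :=
  (2⁻¹ : ℂ) • (apply ℝ ℂ 1 - I • apply ℝ ℂ I)

noncomputable def dzbarFunctional : (ℂ →L[ℝ] ℂ) →L[ℝ] ℂ :=
  (2⁻¹ : ℂ) • (apply ℝ ℂ 1 + I • apply ℝ ℂ I)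

lemma wirtingerDz_eq_dzFunctional (f : ℂ → ℂ) :
    wirtingerDz f = fun z => dzFunctional (fderiv ℝ f z) := by
  funext z
  simp [wirtingerDz, dzFunctional]
  ring

lemma wirtingerDzbar_eq_dzbarFunctional (f : ℂ → ℂ) :
    wirtingerDzbar f = fun z => dzbarFunctional (fderiv ℝ f z) := by
  funext z
  simp [wirtingerDzbar, dzbarFunctional]
  ring

section Wirtinger

variable {f g : ℂ → ℂ} {z : ℂ}

lemma wirtingerDzbar_sub (hf : DifferentiableAt ℝ f z) (hg : DifferentiableAt ℝ g z) :
    wirtingerDzbar (fun w => f w - g w) z = wirtingerDzbar f z - wirtingerDzbar g z := by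
  simp only [wirtingerDzbar, fderiv_fun_sub hf hg, sub_apply]
  ring

lemma wirtingerDzbar_mul (hf : DifferentiableAt ℝ f z) (hg : DifferentiableAt ℝ g z) :
    wirtingerDzbar (fun w => f w * g w) z = wirtingerDzbar f z * g z + f z * wirtingerDzbar g z := by
  simp only [wirtingerDzbar, fderiv_fun_mul hf hg, add_apply, smul_apply, smul_eq_mul]
  ring

lemma wirtingerDzbar_const_mul (c : ℂ) (hf : DifferentiableAt ℝ f z) :
    wirtingerDzbar (fun w => c * f w) z = c * wirtingerDzbar f z := by
  simp only [wirtingerDzbar, fderiv_const_mul hf, smul_apply, smul_eq_mul]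
  ring

lemma wirtingerDz_const_mul (c : ℂ) (hf : DifferentiableAt ℝ f z) :
    wirtingerDz (fun w => c * f w) z = c * wirtingerDz f z := by
  simp only [wirtingerDz, fderiv_const_mul hf, smul_apply, smul_eq_mul]
  ring

lemma wirtingerDzbar_eq_zero (hf : DifferentiableAt ℂ f z) : wirtingerDzbar f z = 0 := by
  have hI : fderiv ℂ f z I = I * fderiv ℂ f z 1 := by simp
  simp [wirtingerDzbar, hf.fderiv_restrictScalars ℝ, hI, ← mul_assoc]

lemma wirtingerDzbar_ofReal_im_div (a : ℝ) :
    wirtingerDzbar (fun w => ((w.im / a : ℝ) : ℂ)) z = I / (2 * a) := by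
  have : HasFDerivAt (fun w : ℂ => ((w.im / a : ℝ) : ℂ)) (a⁻¹ • ofRealCLM.comp imCLM) z := by
    convert (a⁻¹ • ofRealCLM.comp imCLM).hasFDerivAt using 1
    funext w
    simp [div_eq_inv_mul]
  rw [wirtingerDzbar, this.fderiv]
  simp
  ring

lemma ContDiff.wirtingerDz {m n : WithTop ℕ∞} (hf : ContDiff ℝ n f) (hmn : m + 1 ≤ n) :
    ContDiff ℝ m (wirtingerDz f) := by
  rw [wirtingerDz_eq_dzFunctional]
  exact dzFunctional.contDiff.comp (hf.fderiv_right hmn)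

lemma wirtingerDzbar_wirtingerDz_comm (hf : ContDiff ℝ 2 f) :
    wirtingerDzbar (wirtingerDz f) z = wirtingerDz (wirtingerDzbar f) z := by
  have hF : DifferentiableAt ℝ (fderiv ℝ f) z :=
    (hf.fderiv_right (m := 1) le_rfl).differentiable one_ne_zero z
  have hsymm := (hf.contDiffAt (x := z)).isSymmSndFDerivAt (n := 2) (by simp) 1 I
  simp only [wirtingerDz_eq_dzFunctional, wirtingerDzbar_eq_dzbarFunctional]
  rw [fderiv_fun_comp z dzFunctional.differentiableAt hF,
    fderiv_fun_comp z dzbarFunctional.differentiableAt hF]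
  simp only [ContinuousLinearMap.fderiv]
  simp [dzFunctional, dzbarFunctional, hsymm]
  ring

end Wirtinger

section Dop

variable {τ : ℂ} {f : ℂ → ℂ}

lemma contDiff_Dop (hf : ContDiff ℝ ∞ f) : ContDiff ℝ ∞ (Dop τ f) := by
  have hdz := hf.wirtingerDz (m := ∞) le_rfl
  have hv : ContDiff ℝ ∞ (fun w : ℂ => ((w.im / τ.im : ℝ) : ℂ)) :=
    ofRealCLM.contDiff.comp (imCLM.contDiff.div_const _)
  unfold Dop
  fun_prop

lemma Dop_const_mul (c : ℂ) {z : ℂ} (hf : DifferentiableAt ℝ f z) :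
    Dop τ (fun w => c * f w) z = c * Dop τ f z := by
  simp only [Dop, wirtingerDz_const_mul c hf]
  ring

lemma Dop_zero (z : ℂ) : Dop τ (fun _ => 0) z = 0 := by
  simp [Dop, wirtingerDz]

lemma wirtingerDzbar_Dop (hτ : τ.im ≠ 0) (hf : ContDiff ℝ 2 f) (z : ℂ) :
    wirtingerDzbar (Dop τ f) z = Dop τ (wirtingerDzbar f) z + f z := by
  have hdz : DifferentiableAt ℝ (wirtingerDz f) z :=
    (hf.wirtingerDz (m := 1) le_rfl).differentiable one_ne_zero z
  have hf' : DifferentiableAt ℝ f z := hf.differentiable two_ne_zero z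
  have hv : DifferentiableAt ℝ (fun w : ℂ => ((w.im / τ.im : ℝ) : ℂ)) z := by fun_prop
  unfold Dop
  rw [wirtingerDzbar_sub (by fun_prop) (by fun_prop), wirtingerDzbar_const_mul _ hdz,
    wirtingerDzbar_mul (by fun_prop) hf', wirtingerDzbar_const_mul _ hv,
    wirtingerDzbar_ofReal_im_div, wirtingerDzbar_wirtingerDz_comm hf]
  have ha : (τ.im : ℂ) ≠ 0 := ofReal_ne_zero.2 hτ
  push_cast
  field_simp
  linear_combination (-Real.pi * f z) * I_sq

end Dop

theorem wirtingerDzbar_iterate_Dop {τ : ℂ} (hτ : τ.im ≠ 0) {f : ℂ → ℂ} (hf : Differentiable ℂ f)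
    (k : ℕ) (z : ℂ) :
    wirtingerDzbar ((Dop τ)^[k + 1] f) z = (k + 1) * (Dop τ)^[k] f z := by
  have hsmooth (n : ℕ) : ContDiff ℝ ∞ ((Dop τ)^[n] f) := by
    induction n with
    | zero => exact hf.contDiff.restrict_scalars ℝ
    | succ n ih => simpa only [Function.iterate_succ_apply'] using contDiff_Dop ih
  induction k generalizing z with
  | zero =>
    have hholo : wirtingerDzbar f = fun _ => 0 := funext fun w => wirtingerDzbar_eq_zero (hf w)
    simp only [zero_add, Function.iterate_one, Function.iterate_zero_apply,
      wirtingerDzbar_Dop hτ (hf.contDiff.restrict_scalars ℝ), hholo, Dop_zero, Nat.cast_zero, one_mul]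
  | succ k ih =>
    have hprev : wirtingerDzbar ((Dop τ)^[k + 1] f) = fun w => (k + 1 : ℂ) * (Dop τ)^[k] f w :=
      funext ih
    rw [Function.iterate_succ_apply', wirtingerDzbar_Dop hτ (contDiff_infty.1 (hsmooth _) 2), hprev,
      Dop_const_mul _ ((hsmooth k).differentiable (by simp) z), Function.iterate_succ_apply']
    push_cast
    ring

lemma differentiable_thetaFn {τ : ℂ} (hτ : 0 < τ.im) : Differentiable ℂ (thetaFn τ) := by
  have : thetaFn τ = fun z => jacobiTheta₂ z τ := by
    funext z
    simp only [thetaFn, jacobiTheta₂, jacobiTheta₂_term]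
    exact tsum_congr fun n => by ring_nf
  rw [this]
  exact fun z => differentiableAt_jacobiTheta₂_fst z hτ

/-- `∂/∂z̄ (D^k θ) = k · D^{k-1} θ` for all `k ≥ 1`. -/
theorem stmt_6 (τ : ℂ) (hτ : 0 < τ.im) (k : ℕ) (hk : 1 ≤ k) (z : ℂ) :
    wirtingerDzbar ((Dop τ)^[k] (thetaFn τ)) z =
      (k : ℂ) * (Dop τ)^[k - 1] (thetaFn τ) z := by
  obtain ⟨n, rfl⟩ : ∃ n, k = n + 1 := ⟨k - 1, by omega⟩
  rw [wirtingerDzbar_iterate_Dop hτ.ne' (differentiable_thetaFn hτ)]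
  simp
end

section
/- Define g_{a,b} for nonnegative integers a < b of different parity by g_{a,b} = (b−a)!·W^a(e*_{b−a+1}), extended symmetrically g_{b,a} = g_{a,b}, where W is the weight-two operator W = −(π/a(L))(conj(ω₁)∂/∂ω₁ + conj(ω₂)∂/∂ω₂) and e*_n are the (modified) Eisenstein series. Given that W(f_{m,n}) = f_{m+2,n} + n·f_{m+1,n+1} and that e*_n = (2/(n−1)!) f_{n−1,1} + ∑_{m=2}^{n} f_{n−m,m}/(n−m)!, prove that g_{a,b} = ∑_{k≥0} k!·(C(a,k) + C(b,k))·f_{a+b−k,k+1}, where C(n,k) is the binomial coefficient (zero for k > n). -/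
/-!
Since `k! * C(c, k)` is the falling factorial `c.descFactorial k`, the right-hand side is
`S_{a+b}(a) + S_{a+b}(b)` with `S_N(c) = ∑_k c.descFactorial k • f_{N-k,k+1}`. The rule for `W`,
together with the Pascal-type identity `(c+1)^{(k+1)} = c^{(k+1)} + (k+1) c^{(k)}` for falling
factorials, gives `W S_N(c) = S_{N+2}(c+1)` whenever `c ≤ N`. The expansion of `e*_{d+1}` reads
`d! e*_{d+1} = S_d(0) + S_d(d)`, and applying `W` `a` times with `d = b - a` gives the claim.
-/

open Finset
open scoped Nat

lemma Nat.succ_descFactorial_succ_eq_add (a k : ℕ) :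
    (a + 1).descFactorial (k + 1) = a.descFactorial (k + 1) + (k + 1) * a.descFactorial k := by
  simp only [Nat.descFactorial_eq_factorial_mul_choose, Nat.choose_succ_succ, Nat.factorial_succ]
  ring

section
variable {M : Type*} [AddCommGroup M] [Module ℚ M] (f : ℕ → ℕ → M)

def descFactorialSum (N a : ℕ) : M :=
  ∑ p ∈ antidiagonal N, (a.descFactorial p.1 : ℚ) • f p.2 (p.1 + 1)

lemma descFactorialSum_eq_sum_range (N a : ℕ) :
    descFactorialSum f N a = ∑ k ∈ range (N + 1), (a.descFactorial k : ℚ) • f (N - k) (k + 1) :=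
  Nat.sum_antidiagonal_eq_sum_range_succ (fun i j ↦ (a.descFactorial i : ℚ) • f j (i + 1)) N

lemma descFactorialSum_succ_succ (N a : ℕ) :
    descFactorialSum f (N + 1) (a + 1) = descFactorialSum f (N + 1) a +
      ∑ p ∈ antidiagonal N, ((p.1 + 1) * a.descFactorial p.1 : ℚ) • f p.2 (p.1 + 2) := by
  simp only [descFactorialSum, Nat.sum_antidiagonal_succ, Nat.succ_descFactorial_succ_eq_add,
    Nat.descFactorial_zero, Nat.cast_add, Nat.cast_mul, add_smul, sum_add_distrib]
  push_cast
  abel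

lemma map_descFactorialSum {W : Module.End ℚ M}
    (hW : ∀ m n : ℕ, W (f m n) = f (m + 2) n + (n : ℚ) • f (m + 1) (n + 1))
    {N a : ℕ} (ha : a ≤ N) : W (descFactorialSum f N a) = descFactorialSum f (N + 2) (a + 1) := by
  have hN1 : a.descFactorial (N + 1) = 0 := Nat.descFactorial_eq_zero_iff_lt.2 (by omega)
  have hN2 : a.descFactorial (N + 1 + 1) = 0 := Nat.descFactorial_eq_zero_iff_lt.2 (by omega)
  -- `a ≤ N` kills the boundary terms of both reindexings.
  have shifted : descFactorialSum f (N + 2) a =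
      ∑ p ∈ antidiagonal N, (a.descFactorial p.1 : ℚ) • f (p.2 + 2) (p.1 + 1) := by
    rw [descFactorialSum, Nat.sum_antidiagonal_succ', Nat.sum_antidiagonal_succ', hN2, hN1]
    simp only [Nat.cast_zero, zero_smul, zero_add]
  have raised :
      ∑ p ∈ antidiagonal (N + 1), ((p.1 + 1) * a.descFactorial p.1 : ℚ) • f p.2 (p.1 + 2) =
      ∑ p ∈ antidiagonal N, ((p.1 + 1) * a.descFactorial p.1 : ℚ) • f (p.2 + 1) (p.1 + 2) := by
    rw [Nat.sum_antidiagonal_succ', hN1]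
    simp only [Nat.cast_zero, mul_zero, zero_smul, zero_add]
  rw [descFactorialSum_succ_succ, raised, shifted, descFactorialSum]
  simp only [map_sum, map_smul, hW, smul_add, sum_add_distrib, smul_smul, Nat.cast_add,
    Nat.cast_one, mul_comm]

lemma pow_apply_descFactorialSum {W : Module.End ℚ M}
    (hW : ∀ m n : ℕ, W (f m n) = f (m + 2) n + (n : ℚ) • f (m + 1) (n + 1))
    {N a : ℕ} (ha : a ≤ N) (n : ℕ) :
    (W ^ n) (descFactorialSum f N a) = descFactorialSum f (N + 2 * n) (a + n) := by
  induction n with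
  | zero => rfl
  | succ n ih =>
    rw [pow_succ', Module.End.mul_apply, ih, map_descFactorialSum f hW (by omega)]
    rfl

def eisensteinExpansion (n : ℕ) : M :=
  (2 / (n - 1)! : ℚ) • f (n - 1) 1 + ∑ m ∈ Icc 2 n, (1 / (n - m)! : ℚ) • f (n - m) m

lemma factorial_smul_eisensteinExpansion (d : ℕ) :
    (d ! : ℚ) • eisensteinExpansion f (d + 1) =
      descFactorialSum f d 0 + descFactorialSum f d d := by
  have hd : (d ! : ℚ) ≠ 0 := by positivity
  have tail : (d ! : ℚ) • ∑ m ∈ Icc 2 (d + 1), (1 / (d + 1 - m)! : ℚ) • f (d + 1 - m) m =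
      ∑ k ∈ range d, (d.descFactorial (k + 1) : ℚ) • f (d - (k + 1)) (k + 2) := by
    rw [← Ico_add_one_right_eq_Icc, sum_Ico_eq_sum_range, smul_sum,
      show d + 1 + 1 - 2 = d by omega]
    refine sum_congr rfl fun k hk ↦ ?_
    have hk : k + 1 ≤ d := by simpa using hk
    rw [smul_smul, show d + 1 - (2 + k) = d - (k + 1) by omega, add_comm 2 k,
      ← Nat.factorial_mul_descFactorial hk]
    congr 1
    have : ((d - (k + 1))! : ℚ) ≠ 0 := by positivity
    push_cast
    field_simp
  rw [eisensteinExpansion, add_tsub_cancel_right, smul_add, smul_smul, tail,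
    descFactorialSum_eq_sum_range, descFactorialSum_eq_sum_range, sum_range_succ',
    sum_range_succ' _ d]
  simp only [Nat.zero_descFactorial_succ, Nat.descFactorial_zero, Nat.cast_zero, Nat.cast_one,
    zero_smul, sum_const_zero, one_smul, Nat.sub_zero, zero_add, mul_div_cancel₀ _ hd, two_smul]
  abel

lemma descFactorialSum_add_eq_sum_choose (N a b : ℕ) :
    descFactorialSum f N a + descFactorialSum f N b =
      ∑ k ∈ range (N + 1), ((k ! * (a.choose k + b.choose k) : ℕ) : ℚ) • f (N - k) (k + 1) := by
  simp only [descFactorialSum_eq_sum_range, ← sum_add_distrib, ← add_smul, mul_add,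
    Nat.descFactorial_eq_factorial_mul_choose, Nat.cast_add]

end

theorem stmt_8_general (M : Type*) [AddCommGroup M] [Module ℚ M]
    (f : ℕ → ℕ → M) (W : Module.End ℚ M)
    (hW : ∀ m n : ℕ, W (f m n) = f (m + 2) n + (n : ℚ) • f (m + 1) (n + 1))
    (e : ℕ → M)
    (he : ∀ n : ℕ, 2 ≤ n →
      e n = (2 / (n - 1).factorial : ℚ) • f (n - 1) 1 +
        ∑ m ∈ Finset.Icc 2 n, (1 / (n - m).factorial : ℚ) • f (n - m) m)
    (a b : ℕ) (hab : a < b) :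
    (((b - a).factorial : ℚ)) • (W ^ a) (e (b - a + 1)) =
      ∑ k ∈ Finset.range (a + b + 1),
        ((k.factorial * (a.choose k + b.choose k) : ℕ) : ℚ) • f (a + b - k) (k + 1) := by
  obtain ⟨d, rfl⟩ : ∃ d, b = a + d := ⟨b - a, by omega⟩
  have he' : e (d + 1) = eisensteinExpansion f (d + 1) := he (d + 1) (by omega)
  rw [Nat.add_sub_cancel_left, he', ← map_smul, factorial_smul_eisensteinExpansion, map_add,
    pow_apply_descFactorialSum f hW (Nat.zero_le d), pow_apply_descFactorialSum f hW le_rfl,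
    ← descFactorialSum_add_eq_sum_choose]
  congr 2 <;> omega

/-- Corollary 1.3: given the action `W(f_{m,n}) = f_{m+2,n} + n f_{m+1,n+1}`
and the expansion `e*_n = (2/(n-1)!) f_{n-1,1} + ∑_{m=2}^{n} f_{n-m,m}/(n-m)!`, the function
`g_{a,b} = (b-a)!·W^a(e*_{b-a+1})` satisfies
`g_{a,b} = ∑_{k ≥ 0} k!(C(a,k)+C(b,k)) f_{a+b-k,k+1}`. -/
theorem stmt_8 (M : Type*) [AddCommGroup M] [Module ℚ M]
    (f : ℕ → ℕ → M) (W : Module.End ℚ M)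
    (hW : ∀ m n : ℕ, W (f m n) = f (m + 2) n + (n : ℚ) • f (m + 1) (n + 1))
    (e : ℕ → M)
    (he : ∀ n : ℕ, 2 ≤ n →
      e n = (2 / (n - 1).factorial : ℚ) • f (n - 1) 1 +
        ∑ m ∈ Finset.Icc 2 n, (1 / (n - m).factorial : ℚ) • f (n - m) m)
    (a b : ℕ) (hab : a < b) (hpar : Odd (a + b)) :
    (((b - a).factorial : ℚ)) • (W ^ a) (e (b - a + 1)) =
      ∑ k ∈ Finset.range (a + b + 1),
        ((k.factorial * (a.choose k + b.choose k) : ℕ) : ℚ) • f (a + b - k) (k + 1) :=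
  stmt_8_general M f W hW e he a b hab
end

section
/- Let (A,d) be a differential graded algebra, B ⊆ ker(d) a graded subspace, Π: A → B a projector, and Q: A → A a degree −1 operator with 1 − Π = dQ + Qd, ΠQ = QΠ = Q² = 0. Define λ₂(a₁,a₂) = a₁a₂ and recursively λₙ by Merkulov's formula (λₙ(a₁,…,aₙ) = ±Q(λ_{n−1}(a₁,…,a_{n−1}))·aₙ ± a₁·Q(λ_{n−1}(a₂,…,aₙ)) + ∑_{k+l=n, k,l≥2} ±Q(λ_k(a₁,…,a_k))·Q(λ_l(a_{k+1},…,aₙ))), and mₙ = Π∘λₙ for n ≥ 2. If n ≥ 3 and (b₁,…,bₙ) are elements of B with bᵢ = 1 (the unit of A) for some i, then mₙ(b₁,…,bₙ) = 0. -/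
/-!
Every term of Merkulov's recursion for `λₙ` is a product with a factor `Q (λₖ …)`. If the
unit occurs among the inputs, then either it sits in the argument of such a factor, which then
vanishes by induction, or it is the remaining factor, so that the term is `Q (λₖ …)` itself.
Hence `λₙ(b₁, …, bₙ) ∈ Q(A)` for `n ≥ 3`, and `ΠQ = Q² = 0` kill it. The induction starts at
`n = 2`, where `λ₂(b, 1) = λ₂(1, b) = b` and `Q(B) = 0` because `QΠ = 0`.
-/

namespace List

variable {α : Type*}

theorem getLastD_eq_of_mem_of_not_mem_dropLast {l : List α} {a : α} (d : α) (ha : a ∈ l)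
    (ha' : a ∉ l.dropLast) : l.getLastD d = a := by
  have hne : l ≠ [] := ne_nil_of_mem ha
  rw [← dropLast_append_getLast hne] at ha ⊢
  rcases mem_append.mp ha with h | h
  · exact absurd h ha'
  · rw [getLastD_concat, mem_singleton.mp h]

theorem headD_eq_of_mem_of_not_mem_tail {l : List α} {a : α} (d : α) (ha : a ∈ l)
    (ha' : a ∉ l.tail) : l.headD d = a := by
  obtain ⟨b, t, rfl⟩ := exists_cons_of_ne_nil (ne_nil_of_mem ha)
  rcases mem_cons.mp ha with h | h
  · exact h.symm
  · exact absurd h ha'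

theorem mem_take_or_mem_drop {l : List α} {a : α} (k : ℕ) (ha : a ∈ l) :
    a ∈ l.take k ∨ a ∈ l.drop k := by
  rw [← mem_append, take_append_drop]
  exact ha

end List

section Merkulov

variable {A : Type*} [Ring A] {Q : A →+ A} {lam : List A → A}
  {sgn1 sgn2 : List A → ℤ} {sgn3 : List A → ℕ → ℤ}

theorem lam_mem_range_of_forall_sublist
    (hrec : ∀ l : List A, 3 ≤ l.length →
      lam l = sgn1 l • (Q (lam l.dropLast) * l.getLastD 0) +
        sgn2 l • (l.headD 0 * Q (lam l.tail)) +
        ∑ k ∈ Finset.Ico 2 (l.length - 1),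
          sgn3 l k • (Q (lam (l.take k)) * Q (lam (l.drop k))))
    {l : List A} (hl : 3 ≤ l.length) (h1 : (1 : A) ∈ l)
    (ih : ∀ l' : List A, l'.length < l.length → 2 ≤ l'.length → l' ⊆ l → (1 : A) ∈ l' →
      Q (lam l') = 0) :
    lam l ∈ Q.range := by
  have hQ_mem (x : A) : Q x ∈ Q.range := ⟨x, rfl⟩
  have hlast : Q (lam l.dropLast) * l.getLastD 0 ∈ Q.range := by
    by_cases h : (1 : A) ∈ l.dropLast
    · rw [ih _ (by simp; omega) (by simp; omega) (List.dropLast_subset l) h, zero_mul]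
      exact zero_mem _
    · rw [List.getLastD_eq_of_mem_of_not_mem_dropLast 0 h1 h, mul_one]
      exact hQ_mem _
  have hhead : l.headD 0 * Q (lam l.tail) ∈ Q.range := by
    by_cases h : (1 : A) ∈ l.tail
    · rw [ih _ (by simp; omega) (by simp; omega) (List.tail_subset l) h, mul_zero]
      exact zero_mem _
    · rw [List.headD_eq_of_mem_of_not_mem_tail 0 h1 h, one_mul]
      exact hQ_mem _
  have hsplit : ∀ k ∈ Finset.Ico 2 (l.length - 1),
      Q (lam (l.take k)) * Q (lam (l.drop k)) = 0 := by
    intro k hk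
    rw [Finset.mem_Ico] at hk
    rcases List.mem_take_or_mem_drop k h1 with h | h
    · rw [ih _ (by simp; omega) (by simp; omega) (List.take_subset k l) h, zero_mul]
    · rw [ih _ (by simp; omega) (by simp; omega) (List.drop_subset k l) h, mul_zero]
  rw [hrec l hl, Finset.sum_congr rfl fun k hk => by rw [hsplit k hk, smul_zero],
    Finset.sum_const_zero, add_zero]
  exact add_mem (zsmul_mem hlast _) (zsmul_mem hhead _)

theorem Q_lam_eq_zero_of_one_mem {B : Set A} {P : A →+ A}
    (hPproj : ∀ b ∈ B, P b = b) (hQP : ∀ x : A, Q (P x) = 0) (hQQ : ∀ x : A, Q (Q x) = 0)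
    (hlam2 : ∀ x y : A, lam [x, y] = x * y)
    (hrec : ∀ l : List A, 3 ≤ l.length →
      lam l = sgn1 l • (Q (lam l.dropLast) * l.getLastD 0) +
        sgn2 l • (l.headD 0 * Q (lam l.tail)) +
        ∑ k ∈ Finset.Ico 2 (l.length - 1),
          sgn3 l k • (Q (lam (l.take k)) * Q (lam (l.drop k))))
    {l : List A} (hl : 2 ≤ l.length) (hB : ∀ x ∈ l, x ∈ B) (h1 : (1 : A) ∈ l) :
    Q (lam l) = 0 := by
  have hQB : ∀ b ∈ B, Q b = 0 := fun b hb => by rw [← hPproj b hb, hQP]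
  induction hn : l.length using Nat.strong_induction_on generalizing l with
  | _ n ih =>
  rcases hl.eq_or_lt with h2 | h3
  · obtain ⟨x, y, rfl⟩ := List.length_eq_two.mp h2.symm
    rw [hlam2]
    rcases List.mem_pair.mp h1 with rfl | rfl
    · rw [one_mul, hQB y (hB y (by simp))]
    · rw [mul_one, hQB x (hB x (by simp))]
  · obtain ⟨x, hx⟩ := lam_mem_range_of_forall_sublist hrec h3 h1
      fun l' hlen hl' hsub h1' => ih _ (hn ▸ hlen) hl' (fun x hx => hB x (hsub hx)) h1' rfl
    rw [← hx, hQQ]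

end Merkulov

theorem stmt_10_general (A : Type*) [Ring A] (B : Set A)
    (P Q : A →+ A)
    (hPproj : ∀ b ∈ B, P b = b)
    (hPQ : ∀ x : A, P (Q x) = 0)
    (hQP : ∀ x : A, Q (P x) = 0)
    (hQQ : ∀ x : A, Q (Q x) = 0)
    (lam : List A → A)
    (hlam2 : ∀ x y : A, lam [x, y] = x * y)
    (sgn1 sgn2 : List A → ℤ) (sgn3 : List A → ℕ → ℤ)
    (hrec : ∀ l : List A, 3 ≤ l.length →
      lam l = sgn1 l • (Q (lam l.dropLast) * l.getLastD 0) +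
        sgn2 l • (l.headD 0 * Q (lam l.tail)) +
        ∑ k ∈ Finset.Ico 2 (l.length - 1),
          sgn3 l k • (Q (lam (l.take k)) * Q (lam (l.drop k)))) :
    ∀ l : List A, 3 ≤ l.length → (∀ x ∈ l, x ∈ B) → (1 : A) ∈ l →
      P (lam l) = 0 := by
  intro l hl hB h1
  obtain ⟨x, hx⟩ := lam_mem_range_of_forall_sublist hrec hl h1
    fun l' _ hl' hsub h1' =>
      Q_lam_eq_zero_of_one_mem hPproj hQP hQQ hlam2 hrec hl' (fun x hx => hB x (hsub hx)) h1'
  rw [← hx, hPQ]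

/-- Lemma 2.1: in Merkulov's construction, any higher product
`mₙ = Π ∘ λₙ` (`n ≥ 3`) vanishes on a tuple of elements of `B` one of which is the
unit of `A`. Tuples are encoded as lists, `λ` is given by Merkulov's recursion with
arbitrary sign functions. -/
theorem stmt_10 (A : Type*) [Ring A] (B : Set A)
    (d P Q : A →+ A)
    (hBker : ∀ b ∈ B, d b = 0)
    (hPmem : ∀ x : A, P x ∈ B)
    (hPproj : ∀ b ∈ B, P b = b)
    (hhomotopy : ∀ x : A, d (Q x) + Q (d x) = x - P x)
    (hPQ : ∀ x : A, P (Q x) = 0)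
    (hQP : ∀ x : A, Q (P x) = 0)
    (hQQ : ∀ x : A, Q (Q x) = 0)
    (lam : List A → A)
    (hlam2 : ∀ x y : A, lam [x, y] = x * y)
    (sgn1 sgn2 : List A → ℤ) (sgn3 : List A → ℕ → ℤ)
    (hrec : ∀ l : List A, 3 ≤ l.length →
      lam l = sgn1 l • (Q (lam l.dropLast) * l.getLastD 0) +
        sgn2 l • (l.headD 0 * Q (lam l.tail)) +
        ∑ k ∈ Finset.Ico 2 (l.length - 1),
          sgn3 l k • (Q (lam (l.take k)) * Q (lam (l.drop k)))) :
    ∀ l : List A, 3 ≤ l.length → (∀ x ∈ l, x ∈ B) → (1 : A) ∈ l →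
      P (lam l) = 0 :=
  stmt_10_general A B P Q hPproj hPQ hQP hQQ lam hlam2 sgn1 sgn2 sgn3 hrec
end
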